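/- Let G be a finite simple graph with an edge {u,v} whose vertex set is the disjoint union A ⊔ B with u ∈ A and v ∈ B, such that {u,v} is the only edge of G between A and B (i.e. {u,v} is a bridge); let G₁ = G[A] and G₂ = G[B]. If neither (G₁,u) nor (G₂,v) acts as AB, and at least one of them acts as Nope, then γ(G) = s(G₁,u) + s(G₂,v) + 1. -/
import Mathlib


/-- `S` is a dominating set of the finite simple graph `G`. -/
def DomSet {V : Type*} (G : SimpleGraph V) (S : Finset V) : Prop :=
  ∀ v : V, v ∈ S ∨ ∃ w ∈ S, G.Adj w v

/-- `γ(G)`: the minimum size of a dominating set of `G`. -/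
noncomputable def gamma {V : Type*} [Fintype V] (G : SimpleGraph V) : ℕ :=
  sInf {n | ∃ S : Finset V, DomSet G S ∧ S.card = n}

/-- `S` is a rooted dominating set of the induced subgraph `G[A]` with root `u`:
`S ⊆ A` and every vertex of `A` other than `u` is in `S` or adjacent (within `A`)
to a vertex of `S`. -/
def RootedDomSetIn {V : Type*} (G : SimpleGraph V) (A : Finset V) (u : V)
    (S : Finset V) : Prop :=
  S ⊆ A ∧ ∀ v ∈ A, v ≠ u → (v ∈ S ∨ ∃ w ∈ S, G.Adj w v)

/-- `s(G[A], u)`: the minimum size of a rooted dominating set of `(G[A], u)`. -/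
noncomputable def sIn {V : Type*} (G : SimpleGraph V) (A : Finset V) (u : V) : ℕ :=
  sInf {n | ∃ S : Finset V, RootedDomSetIn G A u S ∧ S.card = n}

/-- `(G[A], u)` acts as AB: some minimum rooted dominating set contains `u`. -/
def ActsAB {V : Type*} (G : SimpleGraph V) (A : Finset V) (u : V) : Prop :=
  ∃ S : Finset V, RootedDomSetIn G A u S ∧ S.card = sIn G A u ∧ u ∈ S

/-- `(G[A], u)` acts as LR: it does not act as AB, but some minimum rooted dominating
set dominates `u`. -/
def ActsLR {V : Type*} (G : SimpleGraph V) (A : Finset V) (u : V) : Prop :=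
  ¬ ActsAB G A u ∧
    ∃ S : Finset V, RootedDomSetIn G A u S ∧ S.card = sIn G A u ∧
      (u ∈ S ∨ ∃ w ∈ S, G.Adj w u)

/-- `(G[A], u)` acts as Nope: neither AB nor LR. -/
def ActsNope {V : Type*} (G : SimpleGraph V) (A : Finset V) (u : V) : Prop :=
  ¬ ActsAB G A u ∧ ¬ ActsLR G A u

lemma sIn_exists {V : Type*} [DecidableEq V] (G : SimpleGraph V) (A : Finset V) (u : V) :
    ∃ S : Finset V, RootedDomSetIn G A u S ∧ S.card = sIn G A u := by
  have hne : ∃ n, n ∈ {n | ∃ S : Finset V, RootedDomSetIn G A u S ∧ S.card = n} :=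
    ⟨A.card, A, ⟨le_refl A, fun x hx _ => Or.inl hx⟩, rfl⟩
  obtain ⟨S, hS, hc⟩ := Nat.sInf_mem hne
  exact ⟨S, hS, hc⟩

lemma sIn_le {V : Type*} (G : SimpleGraph V) (A : Finset V) (u : V)
    (S : Finset V) (hS : RootedDomSetIn G A u S) : sIn G A u ≤ S.card :=
  Nat.sInf_le ⟨S, hS, rfl⟩

/-- The 'one side acts as Nope' case of the bridge analysis (Section 6.1):
the vertex set of `G` is the disjoint union `A ⊔ B`, `{u,v}` with `u ∈ A`, `v ∈ B`
is the unique edge between `A` and `B` (a bridge). If neither `(G[A],u)` nor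
`(G[B],v)` acts as AB, and at least one of them acts as Nope, then
`γ(G) = s(G[A],u) + s(G[B],v) + 1`. -/
theorem stmt5 {V : Type*} [Fintype V] [DecidableEq V] (G : SimpleGraph V)
    (A B : Finset V) (u v : V)
    (hdisj : Disjoint A B) (hcover : A ∪ B = Finset.univ)
    (hu : u ∈ A) (hv : v ∈ B) (huv : G.Adj u v)
    (hbridge : ∀ a ∈ A, ∀ b ∈ B, G.Adj a b → a = u ∧ b = v)
    (h₁ : ¬ ActsAB G A u) (h₂ : ¬ ActsAB G B v)
    (h₃ : ActsNope G A u ∨ ActsNope G B v) :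
    gamma G = sIn G A u + sIn G B v + 1 := by
  classical
  set s1 := sIn G A u with hs1
  set s2 := sIn G B v with hs2
  have hmemAB : ∀ x : V, x ∈ A ∨ x ∈ B := by
    intro x
    have : x ∈ A ∪ B := hcover ▸ Finset.mem_univ x
    exact Finset.mem_union.mp this
  -- upper bound
  obtain ⟨S₁, hS₁, hc₁⟩ := sIn_exists G A u
  obtain ⟨S₂, hS₂, hc₂⟩ := sIn_exists G B v
  have hupper : gamma G ≤ s1 + s2 + 1 := by
    have hdom : DomSet G (insert u (S₁ ∪ S₂)) := by
      intro x
      rcases hmemAB x with hx | hx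
      · by_cases hxu : x = u
        · exact Or.inl (by simp [hxu])
        · rcases hS₁.2 x hx hxu with h | ⟨w, hw, hadj⟩
          · exact Or.inl (by simp [h])
          · exact Or.inr ⟨w, by simp [hw], hadj⟩
      · by_cases hxv : x = v
        · exact Or.inr ⟨u, by simp, hxv ▸ huv⟩
        · rcases hS₂.2 x hx hxv with h | ⟨w, hw, hadj⟩
          · exact Or.inl (by simp [h])
          · exact Or.inr ⟨w, by simp [hw], hadj⟩
    have hle : gamma G ≤ (insert u (S₁ ∪ S₂)).card :=
      Nat.sInf_le ⟨_, hdom, rfl⟩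
    have hcard : (insert u (S₁ ∪ S₂)).card ≤ s1 + s2 + 1 := by
      calc (insert u (S₁ ∪ S₂)).card ≤ (S₁ ∪ S₂).card + 1 := Finset.card_insert_le _ _
        _ ≤ S₁.card + S₂.card + 1 := by
            have := Finset.card_union_le S₁ S₂; omega
        _ = s1 + s2 + 1 := by rw [hc₁, hc₂]
    exact hle.trans hcard
  -- lower bound
  have hDne : ∃ n, n ∈ {n | ∃ S : Finset V, DomSet G S ∧ S.card = n} :=
    ⟨(Finset.univ : Finset V).card, Finset.univ,
      fun x => Or.inl (Finset.mem_univ x), rfl⟩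
  obtain ⟨D, hD, hDc⟩ := Nat.sInf_mem hDne
  have hDc : D.card = gamma G := hDc
  set D₁ := D ∩ A with hD₁
  set D₂ := D ∩ B with hD₂
  have hsplit : D.card = D₁.card + D₂.card := by
    rw [← Finset.card_union_of_disjoint
      (Finset.disjoint_of_subset_left (Finset.inter_subset_right)
        (Finset.disjoint_of_subset_right (Finset.inter_subset_right) hdisj))]
    congr 1
    rw [← Finset.inter_union_distrib_left, hcover, Finset.inter_univ]
  have hr₁ : RootedDomSetIn G A u D₁ := by
    refine ⟨Finset.inter_subset_right, fun x hx hxu => ?_⟩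
    rcases hD x with h | ⟨w, hw, hadj⟩
    · exact Or.inl (Finset.mem_inter.mpr ⟨h, hx⟩)
    · rcases hmemAB w with hwA | hwB
      · exact Or.inr ⟨w, Finset.mem_inter.mpr ⟨hw, hwA⟩, hadj⟩
      · exact absurd (hbridge x hx w hwB hadj.symm).1 hxu
  have hr₂ : RootedDomSetIn G B v D₂ := by
    refine ⟨Finset.inter_subset_right, fun x hx hxv => ?_⟩
    rcases hD x with h | ⟨w, hw, hadj⟩
    · exact Or.inl (Finset.mem_inter.mpr ⟨h, hx⟩)
    · rcases hmemAB w with hwA | hwB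
      · exact absurd (hbridge w hwA x hx hadj).2 hxv
      · exact Or.inr ⟨w, Finset.mem_inter.mpr ⟨hw, hwB⟩, hadj⟩
  have hle₁ : s1 ≤ D₁.card := sIn_le G A u D₁ hr₁
  have hle₂ : s2 ≤ D₂.card := sIn_le G B v D₂ hr₂
  have hlower : s1 + s2 + 1 ≤ gamma G := by
    by_contra hcon
    push_neg at hcon
    have heq₁ : D₁.card = s1 := by omega
    have heq₂ : D₂.card = s2 := by omega
    have hLRA : ActsLR G A u := by
      refine ⟨h₁, D₁, hr₁, heq₁, ?_⟩
      rcases hD u with h | ⟨w, hw, hadj⟩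
      · exact Or.inl (Finset.mem_inter.mpr ⟨h, hu⟩)
      · rcases hmemAB w with hwA | hwB
        · exact Or.inr ⟨w, Finset.mem_inter.mpr ⟨hw, hwA⟩, hadj⟩
        · exfalso
          have hwv : w = v := (hbridge u hu w hwB hadj.symm).2
          exact h₂ ⟨D₂, hr₂, heq₂, Finset.mem_inter.mpr ⟨hwv ▸ hw, hv⟩⟩
    have hLRB : ActsLR G B v := by
      refine ⟨h₂, D₂, hr₂, heq₂, ?_⟩
      rcases hD v with h | ⟨w, hw, hadj⟩
      · exact Or.inl (Finset.mem_inter.mpr ⟨h, hv⟩)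
      · rcases hmemAB w with hwA | hwB
        · exfalso
          have hwu : w = u := (hbridge w hwA v hv hadj).1
          exact h₁ ⟨D₁, hr₁, heq₁, Finset.mem_inter.mpr ⟨hwu ▸ hw, hu⟩⟩
        · exact Or.inr ⟨w, Finset.mem_inter.mpr ⟨hw, hwB⟩, hadj⟩
    rcases h₃ with h | h
    · exact h.2 hLRA
    · exact h.2 hLRB
  omega
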